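/- Let S be a nonnegative integrable random variable on a probability space with m := 1 − E[S] satisfying 0 < m < 1, fix T > 0 and let α ∈ (0,1]. Let x₀ ∈ ℝ and let I : ℝ → [0,∞) be any function satisfying C_BS(x, I(x)) = E[(S − e^x)₊] + α·m for all x ≥ x₀. Then, denoting by c the unique real number with N(c) = α·m, the function x ↦ I(x) − √(2x/T) converges to c/√T as x → ∞. In particular the Put-implied volatility satisfies I_S^p(x) = I_S^1(x) = √(2x/T) + N^{-1}(m)/√T + o(1) and the α-collateralised Call implied volatility satisfies I_S^α(x) = √(2x/T) + N^{-1}(α·m)/√T + o(1) as x → ∞. -/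

import Mathlib

open MeasureTheory Filter

/-- Standard normal cumulative distribution function. -/
noncomputable def stdNormalCDF (y : ℝ) : ℝ :=
  ∫ t in Set.Iic y, Real.exp (-t ^ 2 / 2) / Real.sqrt (2 * Real.pi)

/-- Black-Scholes d₊ (maturity `T`, log-strike `x`, volatility `σ`). -/
noncomputable def dplus (T x σ : ℝ) : ℝ := -x / (σ * Real.sqrt T) + σ * Real.sqrt T / 2

/-- Black-Scholes d₋ (maturity `T`, log-strike `x`, volatility `σ`). -/
noncomputable def dminus (T x σ : ℝ) : ℝ := -x / (σ * Real.sqrt T) - σ * Real.sqrt T / 2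

/-- Black-Scholes Call price (maturity `T`, log-strike `x`, volatility `σ`),
with the convention `CBS T x 0 = max (1 - exp x) 0`. -/
noncomputable def CBS (T x σ : ℝ) : ℝ :=
  if σ = 0 then max (1 - Real.exp x) 0
  else stdNormalCDF (dplus T x σ) - Real.exp x * stdNormalCDF (dminus T x σ)

/-- Black-Scholes Put price (maturity `T`, log-strike `x`, volatility `σ`),
with the convention `PBS T x 0 = max (exp x - 1) 0`. -/
noncomputable def PBS (T x σ : ℝ) : ℝ :=
  if σ = 0 then max (Real.exp x - 1) 0
  else Real.exp x * stdNormalCDF (-dminus T x σ) - stdNormalCDF (-dplus T x σ)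

/-!
Write `s = √(2x)` and `w = σ√T`. For `w = s + a` with `a` fixed, `d₊ = a - a²/(2w) → a`, while
`eˣ N(d₋) ≤ N'(d₊)/|d₋| → 0` by the Mills ratio bound and `eˣ N'(d₋) = N'(d₊)`; so the Call price
along the volatility `(√(2x) + a)/√T` tends to `N(a)`. On the other hand the α-collateralised Call
price tends to `α m`, because `E[(S - eˣ)₊] → 0` by dominated convergence. Since the Black–Scholes
price is strictly increasing in the volatility, comparing `I(x)` with `(√(2x) + a)/√T` for `N(a)`
slightly below and above `α m = N(c)` squeezes `I(x)√T - √(2x)` to `c`.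
-/

open Real Set Topology

noncomputable def stdNormalPDF (t : ℝ) : ℝ := exp (-t ^ 2 / 2) / √(2 * π)

lemma stdNormalPDF_eq_gaussianPDFReal : stdNormalPDF = ProbabilityTheory.gaussianPDFReal 0 1 := by
  ext t
  simp [stdNormalPDF, ProbabilityTheory.gaussianPDFReal_def, div_eq_inv_mul]

lemma stdNormalPDF_pos (t : ℝ) : 0 < stdNormalPDF t := by
  rw [stdNormalPDF_eq_gaussianPDFReal]
  exact ProbabilityTheory.gaussianPDFReal_pos _ _ _ one_ne_zero

lemma integrable_stdNormalPDF : Integrable stdNormalPDF := by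
  rw [stdNormalPDF_eq_gaussianPDFReal]
  exact ProbabilityTheory.integrable_gaussianPDFReal _ _

lemma continuous_stdNormalPDF : Continuous stdNormalPDF := by
  unfold stdNormalPDF
  fun_prop

lemma hasDerivAt_stdNormalPDF (t : ℝ) : HasDerivAt stdNormalPDF (-t * stdNormalPDF t) t := by
  have hexponent : HasDerivAt (fun t : ℝ => -t ^ 2 / 2) (-t) t :=
    ((hasDerivAt_pow 2 t).neg.div_const 2).congr_deriv (by norm_num; ring)
  exact (hexponent.exp.div_const √(2 * π)).congr_deriv (by simp only [stdNormalPDF]; ring)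

lemma integrable_mul_stdNormalPDF : Integrable fun t => t * stdNormalPDF t := by
  refine ((integrable_mul_exp_neg_mul_sq (b := 1 / 2) (by norm_num)).div_const √(2 * π)).congr
    (.of_forall fun t => ?_)
  simp only [stdNormalPDF]
  ring_nf

lemma stdNormalCDF_eq_add_intervalIntegral (y : ℝ) :
    stdNormalCDF y = stdNormalCDF 0 + ∫ t in (0 : ℝ)..y, stdNormalPDF t := by
  have := intervalIntegral.integral_Iic_sub_Iic (μ := volume)
    integrable_stdNormalPDF.integrableOn integrable_stdNormalPDF.integrableOn (a := 0) (b := y)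
  simp only [stdNormalCDF, ← stdNormalPDF.eq_def] at this ⊢
  linarith

lemma hasDerivAt_stdNormalCDF (y : ℝ) : HasDerivAt stdNormalCDF (stdNormalPDF y) y := by
  rw [funext stdNormalCDF_eq_add_intervalIntegral]
  exact (intervalIntegral.integral_hasDerivAt_right integrable_stdNormalPDF.intervalIntegrable
    continuous_stdNormalPDF.stronglyMeasurable.stronglyMeasurableAtFilter
    continuous_stdNormalPDF.continuousAt).const_add _

lemma continuous_stdNormalCDF : Continuous stdNormalCDF :=
  continuous_iff_continuousAt.2 fun y => (hasDerivAt_stdNormalCDF y).continuousAt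

lemma strictMono_stdNormalCDF : StrictMono stdNormalCDF :=
  strictMono_of_deriv_pos fun y => (hasDerivAt_stdNormalCDF y).deriv ▸ stdNormalPDF_pos y

lemma stdNormalCDF_nonneg (y : ℝ) : 0 ≤ stdNormalCDF y :=
  setIntegral_nonneg measurableSet_Iic fun t _ => (stdNormalPDF_pos t).le

lemma integral_Iic_neg_mul_stdNormalPDF (y : ℝ) :
    ∫ t in Iic y, -t * stdNormalPDF t = stdNormalPDF y := by
  have hlim : Tendsto stdNormalPDF atBot (𝓝 0) := by
    have hsq : Tendsto (fun t : ℝ => t ^ 2) atBot atTop :=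
      ((tendsto_pow_atTop two_ne_zero).comp tendsto_neg_atBot_atTop).congr fun t => by simp
    have h := (tendsto_exp_atBot.comp (tendsto_neg_atTop_atBot.comp
      (hsq.atTop_div_const two_pos))).div_const √(2 * π)
    rw [zero_div] at h
    exact h.congr fun t => by simp [stdNormalPDF, neg_div]
  simpa using integral_Iic_of_hasDerivAt_of_tendsto'
    (fun t _ => hasDerivAt_stdNormalPDF t) (integrable_mul_stdNormalPDF.neg.integrableOn.congr_fun
      (fun t _ => by simp) measurableSet_Iic) hlim

lemma stdNormalCDF_le_stdNormalPDF_div {y : ℝ} (hy : y < 0) :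
    stdNormalCDF y ≤ stdNormalPDF y / -y := by
  calc stdNormalCDF y ≤ ∫ t in Iic y, -t / -y * stdNormalPDF t := by
        refine setIntegral_mono_on integrable_stdNormalPDF.integrableOn
          ((integrable_mul_stdNormalPDF.div_const y).integrableOn.congr_fun
            (fun t _ => by field_simp) measurableSet_Iic) measurableSet_Iic fun t ht => ?_
        have : 1 ≤ -t / -y := by rw [le_div_iff₀ (neg_pos.2 hy)]; linarith [mem_Iic.1 ht]
        change stdNormalPDF t ≤ _
        nlinarith [stdNormalPDF_pos t]
    _ = stdNormalPDF y / -y := by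
        simp_rw [div_mul_eq_mul_div, integral_div, integral_Iic_neg_mul_stdNormalPDF]

lemma dminus_eq_dplus_sub (T x σ : ℝ) : dminus T x σ = dplus T x σ - σ * √T := by
  unfold dminus dplus
  ring

lemma CBS_of_ne_zero (T x : ℝ) {σ : ℝ} (hσ : σ ≠ 0) :
    CBS T x σ = stdNormalCDF (dplus T x σ) - exp x * stdNormalCDF (dminus T x σ) :=
  if_neg hσ

lemma CBS_zero_of_nonneg (T : ℝ) {x : ℝ} (hx : 0 ≤ x) : CBS T x 0 = 0 := by
  simp [CBS, one_le_exp hx]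

lemma exp_mul_stdNormalPDF_dminus {T : ℝ} (hT : 0 < T) (x : ℝ) {σ : ℝ} (hσ : σ ≠ 0) :
    exp x * stdNormalPDF (dminus T x σ) = stdNormalPDF (dplus T x σ) := by
  have hw : σ * √T ≠ 0 := mul_ne_zero hσ (sqrt_pos.2 hT).ne'
  unfold stdNormalPDF dminus dplus
  rw [mul_div_assoc', ← exp_add]
  congr 2
  field_simp
  ring

lemma hasDerivAt_CBS {T : ℝ} (hT : 0 < T) (x : ℝ) {σ : ℝ} (hσ : 0 < σ) :
    HasDerivAt (CBS T x) (stdNormalPDF (dplus T x σ) * √T) σ := by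
  have hw : σ * √T ≠ 0 := mul_ne_zero hσ.ne' (sqrt_pos.2 hT).ne'
  have hratio : HasDerivAt (fun u => -x / (u * √T)) (x * √T / (σ * √T) ^ 2) σ :=
    ((hasDerivAt_const σ (-x)).div ((hasDerivAt_id σ).mul_const √T) hw).congr_deriv
      (by simp only [id]; ring)
  have hdplus : HasDerivAt (dplus T x) (x * √T / (σ * √T) ^ 2 + √T / 2) σ :=
    hratio.add (((hasDerivAt_id σ).mul_const √T).div_const 2 |>.congr_deriv (by ring))
  have hdminus : HasDerivAt (dminus T x) (x * √T / (σ * √T) ^ 2 - √T / 2) σ :=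
    hratio.sub (((hasDerivAt_id σ).mul_const √T).div_const 2 |>.congr_deriv (by ring))
  have hprice := ((hasDerivAt_stdNormalCDF _).comp σ hdplus).sub
    (((hasDerivAt_stdNormalCDF _).comp σ hdminus).const_mul (exp x))
  refine (hprice.congr_deriv ?_).congr_of_eventuallyEq ?_
  · rw [← mul_assoc, exp_mul_stdNormalPDF_dminus hT x hσ.ne']
    ring
  · filter_upwards [lt_mem_nhds hσ] with u hu using CBS_of_ne_zero T x hu.ne'

lemma strictMonoOn_CBS {T : ℝ} (hT : 0 < T) (x : ℝ) : StrictMonoOn (CBS T x) (Ioi 0) := by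
  refine strictMonoOn_of_deriv_pos (convex_Ioi 0)
    (fun σ hσ => (hasDerivAt_CBS hT x hσ).continuousAt.continuousWithinAt) fun σ hσ => ?_
  rw [interior_Ioi] at hσ
  rw [(hasDerivAt_CBS hT x hσ).deriv]
  exact mul_pos (stdNormalPDF_pos _) (sqrt_pos.2 hT)

lemma exp_mul_stdNormalCDF_dminus_le {T : ℝ} (hT : 0 < T) (x : ℝ) {σ : ℝ} (hσ : σ ≠ 0)
    (hd : dminus T x σ < 0) :
    exp x * stdNormalCDF (dminus T x σ) ≤ stdNormalPDF (dplus T x σ) / -dminus T x σ := by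
  calc exp x * stdNormalCDF (dminus T x σ)
      ≤ exp x * (stdNormalPDF (dminus T x σ) / -dminus T x σ) :=
        mul_le_mul_of_nonneg_left (stdNormalCDF_le_stdNormalPDF_div hd) (exp_pos x).le
    _ = stdNormalPDF (dplus T x σ) / -dminus T x σ := by
        rw [mul_div_assoc', exp_mul_stdNormalPDF_dminus hT x hσ]

lemma tendsto_CBS_of_tendsto_dplus {T : ℝ} (hT : 0 < T) {l : Filter ℝ} {σ : ℝ → ℝ} {a : ℝ}
    (hσ : Tendsto σ l atTop) (hd : Tendsto (fun x => dplus T x (σ x)) l (𝓝 a)) :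
    Tendsto (fun x => CBS T x (σ x)) l (𝓝 (stdNormalCDF a)) := by
  have hdminus : Tendsto (fun x => -dminus T x (σ x)) l atTop := by
    simp_rw [dminus_eq_dplus_sub, neg_sub, sub_eq_add_neg]
    exact (hσ.atTop_mul_const (sqrt_pos.2 hT)).atTop_add hd.neg
  have hσpos := hσ.eventually_gt_atTop 0
  have hdneg := hdminus.eventually_gt_atTop 0
  have hbound : Tendsto (fun x => stdNormalPDF (dplus T x (σ x)) / -dminus T x (σ x)) l (𝓝 0) :=
    ((continuous_stdNormalPDF.tendsto a).comp hd).div_atTop hdminus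
  have hput : Tendsto (fun x => exp x * stdNormalCDF (dminus T x (σ x))) l (𝓝 0) := by
    refine tendsto_of_tendsto_of_tendsto_of_le_of_le' tendsto_const_nhds hbound
      (.of_forall fun x => mul_nonneg (exp_pos x).le (stdNormalCDF_nonneg _)) ?_
    filter_upwards [hσpos, hdneg] with x hσx hdx
    exact exp_mul_stdNormalCDF_dminus_le hT x hσx.ne' (neg_pos.1 hdx)
  have hlim := ((continuous_stdNormalCDF.tendsto a).comp hd).sub hput
  rw [sub_zero] at hlim
  refine hlim.congr' ?_
  filter_upwards [hσpos] with x hσx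
  exact (CBS_of_ne_zero T x hσx.ne').symm

lemma tendsto_CBS_sqrt_add {T : ℝ} (hT : 0 < T) (b : ℝ) :
    Tendsto (fun x => CBS T x (√(2 * x / T) + b)) atTop (𝓝 (stdNormalCDF (b * √T))) := by
  have hsT : 0 < √T := sqrt_pos.2 hT
  have hσ : Tendsto (fun x => √(2 * x / T) + b) atTop atTop :=
    tendsto_atTop_add_const_right _ b
      (tendsto_sqrt_atTop.comp ((tendsto_id.const_mul_atTop two_pos).atTop_div_const hT))
  have hw := hσ.atTop_mul_const hsT
  refine tendsto_CBS_of_tendsto_dplus hT hσ ?_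
  have hlim : Tendsto (fun x => b * √T - (b * √T) ^ 2 / (2 * ((√(2 * x / T) + b) * √T))) atTop
      (𝓝 (b * √T)) := by
    simpa using tendsto_const_nhds.sub (tendsto_const_nhds.div_atTop (hw.const_mul_atTop two_pos))
  refine hlim.congr' ?_
  filter_upwards [eventually_ge_atTop 0, hw.eventually_gt_atTop 0] with x hx hwx
  -- with `s = √(2x)`, `a = b√T` and `w = σ√T = s + a`: `d₊ = (w² - s²)/(2w) = a - a²/(2w)`
  have hwx' : (√(2 * x / T) + b) * √T = √(2 * x) + b * √T := by
    rw [sqrt_div (by linarith), add_mul, div_mul_cancel₀ _ hsT.ne']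
  have hsq : √(2 * x) ^ 2 = 2 * x := sq_sqrt (by linarith)
  rw [hwx'] at hwx ⊢
  unfold dplus
  rw [hwx']
  field_simp
  nlinarith [hsq]

lemma tendsto_integral_max_sub_exp_atTop {Ω : Type*} [MeasurableSpace Ω] {μ : Measure Ω}
    {S : Ω → ℝ} (hS : Integrable S μ) :
    Tendsto (fun x => ∫ ω, max (S ω - exp x) 0 ∂μ) atTop (𝓝 0) := by
  have hlim : ∀ ω, Tendsto (fun x => max (S ω - exp x) 0) atTop (𝓝 0) := fun ω =>
    tendsto_const_nhds.congr' <| (tendsto_exp_atTop.eventually_ge_atTop (S ω)).mono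
      fun x hx => (max_eq_right (by linarith)).symm
  simpa using tendsto_integral_filter_of_dominated_convergence (fun ω => ‖S ω‖)
    (.of_forall fun x => ((hS.aemeasurable.sub_const _).max aemeasurable_const).aestronglyMeasurable)
    (.of_forall fun x => ae_of_all μ fun ω => by
      rw [norm_of_nonneg (le_max_right _ _)]
      exact max_le (by linarith [exp_pos x, le_norm_self (S ω)]) (norm_nonneg _))
    hS.norm (ae_of_all μ hlim)

lemma tendsto_sub_of_tendsto_shift {l : Filter ℝ} {F : ℝ → ℝ → ℝ} {G s I : ℝ → ℝ} {c : ℝ}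
    (hF : ∀ x, StrictMonoOn (F x) (Ioi 0)) (hG : StrictMono G) (hs : Tendsto s l atTop)
    (hshift : ∀ b, Tendsto (fun x => F x (s x + b)) l (𝓝 (G b)))
    (hI : Tendsto (fun x => F x (I x)) l (𝓝 (G c))) (hIpos : ∀ᶠ x in l, 0 < I x) :
    Tendsto (fun x => I x - s x) l (𝓝 c) := by
  refine tendsto_order.2 ⟨fun b hb => ?_, fun b hb => ?_⟩
  · filter_upwards [(hshift b).eventually_lt hI (hG hb), hIpos, hs.eventually_gt_atTop (-b)]
      with x hlt hIx hsx
    have := ((hF x).lt_iff_lt (mem_Ioi.2 (by linarith)) hIx).1 hlt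
    linarith
  · filter_upwards [hI.eventually_lt (hshift b) (hG hb), hIpos, hs.eventually_gt_atTop (-b)]
      with x hlt hIx hsx
    have := ((hF x).lt_iff_lt hIx (mem_Ioi.2 (by linarith))).1 hlt
    linarith

theorem iv_right_wing_expansion_strict_local_martingale_general
    {Ω : Type*} [MeasurableSpace Ω] (μ : Measure Ω)
    (S : Ω → ℝ) (hSint : Integrable S μ)
    (m : ℝ) (hm0 : 0 < m)
    (T : ℝ) (hT : 0 < T) (α : ℝ) (hα : α ∈ Set.Ioc (0:ℝ) 1)
    (x₀ : ℝ) (I : ℝ → ℝ) (hInonneg : ∀ x, 0 ≤ I x)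
    (hI : ∀ x : ℝ, x₀ ≤ x →
      CBS T x (I x) = (∫ ω, max (S ω - Real.exp x) 0 ∂μ) + α * m)
    (c : ℝ) (hc : stdNormalCDF c = α * m) :
    Tendsto (fun x => I x - Real.sqrt (2 * x / T)) atTop (nhds (c / Real.sqrt T)) := by
  have hsT : 0 < √T := sqrt_pos.2 hT
  have hprice : Tendsto (fun x => CBS T x (I x)) atTop (𝓝 (α * m)) := by
    have h := (tendsto_integral_max_sub_exp_atTop hSint).add_const (α * m)
    rw [zero_add] at h
    exact h.congr' <| (eventually_ge_atTop x₀).mono fun x hx => (hI x hx).symm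
  have hIpos : ∀ᶠ x in atTop, 0 < I x := by
    filter_upwards [eventually_ge_atTop x₀, eventually_ge_atTop 0] with x hx hx0
    refine (hInonneg x).lt_of_ne fun hIx => ?_
    have h := hI x hx
    rw [← hIx, CBS_zero_of_nonneg T hx0] at h
    have hpayoff : 0 ≤ ∫ ω, max (S ω - exp x) 0 ∂μ := integral_nonneg fun ω => le_max_right _ _
    linarith [mul_pos hα.1 hm0]
  refine tendsto_sub_of_tendsto_shift (strictMonoOn_CBS hT)
    (strictMono_stdNormalCDF.comp (strictMono_mul_right_of_pos hsT))
    (tendsto_sqrt_atTop.comp ((tendsto_id.const_mul_atTop two_pos).atTop_div_const hT))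
    (tendsto_CBS_sqrt_add hT) ?_ hIpos
  rwa [Function.comp_apply, div_mul_cancel₀ c hsT.ne', hc]

/-- right-wing expansion of the implied volatility in strict local
martingale models: `I(x) = √(2x/T) + N⁻¹(α m)/√T + o(1)` as `x → ∞`. -/
theorem iv_right_wing_expansion_strict_local_martingale
    {Ω : Type*} [MeasurableSpace Ω] (μ : Measure Ω) [IsProbabilityMeasure μ]
    (S : Ω → ℝ) (hS : ∀ ω, 0 ≤ S ω) (hSint : Integrable S μ)
    (m : ℝ) (hm : m = 1 - ∫ ω, S ω ∂μ) (hm0 : 0 < m) (hm1 : m < 1)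
    (T : ℝ) (hT : 0 < T) (α : ℝ) (hα : α ∈ Set.Ioc (0:ℝ) 1)
    (x₀ : ℝ) (I : ℝ → ℝ) (hInonneg : ∀ x, 0 ≤ I x)
    (hI : ∀ x : ℝ, x₀ ≤ x →
      CBS T x (I x) = (∫ ω, max (S ω - Real.exp x) 0 ∂μ) + α * m)
    (c : ℝ) (hc : stdNormalCDF c = α * m) :
    Tendsto (fun x => I x - Real.sqrt (2 * x / T)) atTop (nhds (c / Real.sqrt T)) :=
  iv_right_wing_expansion_strict_local_martingale_general μ S hSint m hm0 T hT α hα x₀ I hInonneg hI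
    c hc
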